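/- arXiv:1906.11656 — 2 statements merged into one kernel-verified Lean document; each statement's English description precedes it below -/
import Mathlib

section
/- Let ρ : ℝ² → [0,∞) be a continuous compactly supported density and let Φ(x) = ∫_{ℝ²} log|x − y| ρ(y) dy be its logarithmic potential; assume that on an open set U ⊂ ℝ² one has ΔΦ = 2π ρ. Let V : U → ℝ be twice continuously differentiable with ΔV ≤ 0 on U (superharmonic), and suppose the Euler–Lagrange relation (π/2)|x|² − Φ(x) + V(x) = μ holds for a constant μ and all x ∈ U. Then ρ(x) ≤ 1 for all x ∈ U. -/
open MeasureTheory Real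

/-- The Laplacian of a function `f : ℝ² → ℝ` (with `ℝ² ≅ ℂ`), computed as the sum of the second
derivatives in the two coordinate directions `1` and `i`. -/
noncomputable def lap (f : ℂ → ℝ) (x : ℂ) : ℝ :=
  fderiv ℝ (fderiv ℝ f) x 1 1 + fderiv ℝ (fderiv ℝ f) x Complex.I Complex.I

lemma lap_congr {f g : ℂ → ℝ} {x : ℂ} (h : f =ᶠ[nhds x] g) : lap f x = lap g x := by
  have h1 : fderiv ℝ f =ᶠ[nhds x] fderiv ℝ g := h.fderiv
  unfold lap
  rw [h1.fderiv_eq]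

lemma lap_add {f g : ℂ → ℝ} {x : ℂ} (hf : ContDiffAt ℝ 2 f x) (hg : ContDiffAt ℝ 2 g x) :
    lap (fun z => f z + g z) x = lap f x + lap g x := by
  have hf' : ∀ᶠ z in nhds x, DifferentiableAt ℝ f z :=
    (hf.eventually (by norm_num)).mono fun z hz => hz.differentiableAt (by norm_num)
  have hg' : ∀ᶠ z in nhds x, DifferentiableAt ℝ g z :=
    (hg.eventually (by norm_num)).mono fun z hz => hz.differentiableAt (by norm_num)
  have h : fderiv ℝ (fun z => f z + g z) =ᶠ[nhds x]
      fun z => fderiv ℝ f z + fderiv ℝ g z :=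
    (hf'.and hg').mono fun z ⟨h1, h2⟩ => fderiv_fun_add h1 h2
  have hdf : DifferentiableAt ℝ (fderiv ℝ f) x :=
    (hf.fderiv_right (m := 1) (by norm_num)).differentiableAt (by norm_num)
  have hdg : DifferentiableAt ℝ (fderiv ℝ g) x :=
    (hg.fderiv_right (m := 1) (by norm_num)).differentiableAt (by norm_num)
  unfold lap
  rw [h.fderiv_eq, fderiv_fun_add hdf hdg]
  simp
  abel

lemma hasFDerivAt_q (z : ℂ) :
    HasFDerivAt (fun w : ℂ => (π / 2) * ‖w‖ ^ 2)
      ((π • (innerSL ℝ : ℂ →L[ℝ] ℂ →L[ℝ] ℝ)) z) z := by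
  have h := ((hasFDerivAt_id z).inner ℝ (hasFDerivAt_id z)).const_mul (π / 2)
  have e1 : (fun w : ℂ => (π / 2) * ‖w‖ ^ 2) = fun y => π / 2 * inner ℝ (id y) (id y) := by
    funext w; simp [real_inner_self_eq_norm_sq]
  rw [e1]
  refine h.congr_fderiv ?_
  ext v
  simp [real_inner_comm]
  ring

lemma lap_q (x : ℂ) : lap (fun w : ℂ => (π / 2) * ‖w‖ ^ 2) x = 2 * π := by
  have h1 : fderiv ℝ (fun w : ℂ => (π / 2) * ‖w‖ ^ 2) =
      ⇑(π • (innerSL ℝ : ℂ →L[ℝ] ℂ →L[ℝ] ℝ)) := by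
    funext z; exact (hasFDerivAt_q z).fderiv
  unfold lap
  rw [h1, ContinuousLinearMap.fderiv]
  simp [Complex.inner]
  erw [innerSL_apply_apply, innerSL_apply_apply]
  simp [Complex.inner]
  ring

/-- **Mean-field incompressibility.** Let `ρ ≥ 0` be a continuous compactly supported density
with logarithmic potential `Φ(x) = ∫ log|x-y| ρ(y) dy` satisfying `ΔΦ = 2πρ` on an open set
`U`. If `V` is `C²` and superharmonic (`ΔV ≤ 0`) on `U` and the Euler–Lagrange relation
`(π/2)|x|² − Φ(x) + V(x) = μ` holds on `U`, then `ρ ≤ 1` on `U`. -/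
theorem meanfield_incompressibility (ρ : ℂ → ℝ) (hρc : Continuous ρ)
    (hρnonneg : ∀ x, 0 ≤ ρ x) (hρsupp : HasCompactSupport ρ)
    (U : Set ℂ) (hU : IsOpen U)
    (Φ : ℂ → ℝ) (hΦ : ∀ x, Φ x = ∫ y : ℂ, Real.log ‖x - y‖ * ρ y)
    (hΔΦ : ∀ x ∈ U, lap Φ x = 2 * π * ρ x)
    (V : ℂ → ℝ) (hV : ContDiffOn ℝ 2 V U) (hΔV : ∀ x ∈ U, lap V x ≤ 0)
    (μ : ℝ) (hEL : ∀ x ∈ U, (π / 2) * ‖x‖ ^ 2 - Φ x + V x = μ) :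
    ∀ x ∈ U, ρ x ≤ 1 := by
  intro x hx
  set q : ℂ → ℝ := fun w => (π / 2) * ‖w‖ ^ 2 with hq
  have hqC : ContDiff ℝ 2 q := contDiff_const.mul (contDiff_norm_sq ℝ)
  have hVx : ContDiffAt ℝ 2 V x := hV.contDiffAt (hU.mem_nhds hx)
  -- Φ agrees with q + V - μ near x
  have heq : Φ =ᶠ[nhds x] fun z => q z + V z - μ := by
    filter_upwards [hU.mem_nhds hx] with z hz
    have := hEL z hz
    simp only [hq]
    linarith
  have h1 : lap Φ x = lap (fun z => q z + V z - μ) x := lap_congr heq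
  have h2 : lap (fun z => q z + V z - μ) x = lap (fun z => q z + V z) x := by
    unfold lap
    have : fderiv ℝ (fun z => q z + V z - μ) = fderiv ℝ (fun z => q z + V z) := by
      funext z; exact fderiv_sub_const μ
    rw [this]
  have h3 : lap (fun z => q z + V z) x = lap q x + lap V x :=
    lap_add (hqC.contDiffAt) hVx
  have h4 : lap q x = 2 * π := lap_q x
  have key : 2 * π * ρ x ≤ 2 * π := by
    have := hΔV x hx
    have hΦx := hΔΦ x hx
    nlinarith [hΦx, h1, h2, h3, h4]
  have hπ : (0:ℝ) < 2 * π := by positivity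
  calc ρ x = (2 * π * ρ x) / (2 * π) := by field_simp
    _ ≤ (2 * π) / (2 * π) := by gcongr
    _ = 1 := by field_simp
end

section
/- Let B > 0, let ℓ be a positive integer, N ≥ 2, and let Q(z₁,…,z_N) = ∏_{1≤i<j≤N}(z_i − z_j)^ℓ, so that Ψ_Lau^{(ℓ)} = c_Lau Q e^{−(B/4)Σ_j|z_j|²}. Then for every integer m with 0 ≤ m ≤ ℓ − 1, every s ∈ ℂ, and every fixed z₃,…,z_N ∈ ℂ, ∫_ℂ z̄^m e^{−(B/4)|z|²} · Q((s+z)/2, (s−z)/2, z₃,…,z_N) · e^{−(B/4)( |(s+z)/2|² + |(s−z)/2|² )} dA(z) = 0, where dA is the Lebesgue measure on ℂ ≅ ℝ². Consequently the Laughlin state Ψ_Lau^{(ℓ)} is annihilated by each relative-coordinate projector |φ_m⟩⟨φ_m|_{ij} with m ≤ ℓ − 2, hence is a zero-energy eigenstate of the Haldane pseudo-potential Hamiltonian H(ℓ−2, N) = Σ_{i<j} |φ_{ℓ−2}⟩⟨φ_{ℓ−2}|_{ij}. -/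
open MeasureTheory Real

/-- The analytic (Jastrow) factor of the Laughlin wave-function with exponent `ℓ`. -/
noncomputable def jastrow (N ℓ : ℕ) (z : Fin N → ℂ) : ℂ :=
  ∏ i : Fin N, ∏ j ∈ Finset.Ioi i, (z i - z j) ^ ℓ

lemma jastrow_cons (n ℓ : ℕ) (a : ℂ) (w : Fin n → ℂ) :
    jastrow (n + 1) ℓ (Fin.cons a w) = (∏ j : Fin n, (a - w j) ^ ℓ) * jastrow n ℓ w := by
  unfold jastrow
  rw [Fin.prod_univ_succ]
  congr 1
  · rw [Fin.prod_Ioi_zero]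
    simp
  · refine Finset.prod_congr rfl fun i _ => ?_
    rw [Fin.prod_Ioi_succ]
    simp

lemma integrable_conj_pow_mul_pow_gaussian (c : ℝ) (hc : 0 < c) (m k : ℕ) :
    Integrable (fun z : ℂ =>
      (starRingEnd ℂ z) ^ m * z ^ k * (Real.exp (-c * ‖z‖ ^ 2) : ℂ)) := by
  have hre : 0 < ((c / 2 : ℝ) : ℂ).re := by simpa using half_pos hc
  have hgauss : Integrable fun z : ℂ => Real.exp (-(c / 2) * ‖z‖ ^ 2) := by
    have h := (GaussianFourier.integrable_cexp_neg_mul_sq_norm_add (V := ℂ) hre 0 (0 : ℂ)).norm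
    refine h.congr ?_
    filter_upwards with z
    rw [Complex.norm_exp]
    congr 1
    have hz : (-(((c / 2 : ℝ)) : ℂ) * (‖z‖ : ℂ) ^ 2 + 0 * ((inner ℝ (0 : ℂ) z : ℝ) : ℂ))
        = ((-(c / 2) * ‖z‖ ^ 2 : ℝ) : ℂ) := by
      push_cast
      ring
    rw [hz, Complex.ofReal_re]
  set C : ℝ := (m + k).factorial * Real.exp (1 / (2 * c)) with hC
  refine Integrable.mono' (hgauss.const_mul C) ?_ ?_
  · apply Continuous.aestronglyMeasurable
    exact ((Complex.continuous_conj.pow m).mul (continuous_pow k)).mul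
      (Complex.continuous_ofReal.comp
        ((continuous_const.mul ((continuous_norm (E := ℂ)).pow 2)).rexp))
  · filter_upwards with z
    have hr : (0 : ℝ) ≤ ‖z‖ := norm_nonneg z
    set r : ℝ := ‖z‖ with hrdef
    have hnorm : ‖(starRingEnd ℂ z) ^ m * z ^ k * (Real.exp (-c * ‖z‖ ^ 2) : ℂ)‖
        = r ^ (m + k) * Real.exp (-c * r ^ 2) := by
      rw [norm_mul, norm_mul, norm_pow, norm_pow, RCLike.norm_conj]
      rw [Complex.norm_real, Real.norm_eq_abs, abs_of_pos (Real.exp_pos _), pow_add]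
    rw [hnorm]
    have h1 : r ^ (m + k) ≤ (m + k).factorial * Real.exp r := by
      have := Real.pow_div_factorial_le_exp r hr (m + k)
      have hfac : (0 : ℝ) < (m + k).factorial := by positivity
      calc r ^ (m + k) = (r ^ (m + k) / (m + k).factorial) * (m + k).factorial := by
            field_simp
        _ ≤ Real.exp r * (m + k).factorial := by
            exact mul_le_mul_of_nonneg_right this hfac.le
        _ = (m + k).factorial * Real.exp r := by ring
    have h2 : Real.exp r * Real.exp (-c * r ^ 2)
        ≤ Real.exp (1 / (2 * c)) * Real.exp (-(c / 2) * r ^ 2) := by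
      rw [← Real.exp_add, ← Real.exp_add]
      apply Real.exp_le_exp.mpr
      rw [← sub_nonneg]
      have hid : 1 / (2 * c) + -(c / 2) * r ^ 2 - (r + -c * r ^ 2)
          = (c * r - 1) ^ 2 / (2 * c) := by
        field_simp
        ring
      rw [hid]
      positivity
    calc r ^ (m + k) * Real.exp (-c * r ^ 2)
        ≤ ((m + k).factorial * Real.exp r) * Real.exp (-c * r ^ 2) := by
          apply mul_le_mul_of_nonneg_right h1 (Real.exp_pos _).le
      _ = (m + k).factorial * (Real.exp r * Real.exp (-c * r ^ 2)) := by ring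
      _ ≤ (m + k).factorial * (Real.exp (1 / (2 * c)) * Real.exp (-(c / 2) * r ^ 2)) := by
          apply mul_le_mul_of_nonneg_left h2 (by positivity)
      _ = C * Real.exp (-(c / 2) * r ^ 2) := by rw [hC]; ring

lemma integral_conj_pow_mul_pow_gaussian (c : ℝ) (m k : ℕ) (hmk : m < k) :
    ∫ z : ℂ, (starRingEnd ℂ z) ^ m * z ^ k * (Real.exp (-c * ‖z‖ ^ 2) : ℂ) = 0 := by
  set f : ℂ → ℂ := fun z =>
    (starRingEnd ℂ z) ^ m * z ^ k * (Real.exp (-c * ‖z‖ ^ 2) : ℂ) with hf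
  set d : ℕ := k - m with hd
  have hdpos : 0 < d := Nat.sub_pos_of_lt hmk
  set ω : Circle := Circle.exp (π / d) with hω
  have hωd : (ω : ℂ) ^ d = -1 := by
    rw [hω, Circle.coe_exp, ← Complex.exp_nat_mul]
    have hdc : (d : ℂ) ≠ 0 := Nat.cast_ne_zero.mpr hdpos.ne'
    have : (d : ℂ) * (((π / d : ℝ) : ℂ) * Complex.I) = ↑π * Complex.I := by
      push_cast
      field_simp
    rw [this, Complex.exp_pi_mul_I]
  have hωne : (ω : ℂ) ≠ 0 := ω.coe_ne_zero
  have hconj : (starRingEnd ℂ) (ω : ℂ) = ((ω : ℂ))⁻¹ := by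
    rw [← Circle.coe_inv_eq_conj, Circle.coe_inv]
  have hfac : ((ω : ℂ))⁻¹ ^ m * (ω : ℂ) ^ k = -1 := by
    have hk : (ω : ℂ) ^ k = (ω : ℂ) ^ m * (ω : ℂ) ^ d := by
      rw [← pow_add]; congr 1; omega
    rw [hk, hωd]
    field_simp
    rw [← mul_pow, one_div, inv_mul_cancel₀ hωne, one_pow]
  have key : ∀ z : ℂ, f ((rotation ω) z) = -f z := by
    intro z
    simp only [hf, rotation_apply]
    rw [map_mul, mul_pow, mul_pow, norm_mul]
    have hn : ‖(ω : ℂ)‖ = 1 := by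
      exact Circle.norm_coe ω
    rw [hn, one_mul, hconj]
    have : ((ω : ℂ))⁻¹ ^ m * (starRingEnd ℂ z) ^ m * ((ω : ℂ) ^ k * z ^ k) *
        (Real.exp (-c * ‖z‖ ^ 2) : ℂ)
        = (((ω : ℂ))⁻¹ ^ m * (ω : ℂ) ^ k) *
          ((starRingEnd ℂ z) ^ m * z ^ k * (Real.exp (-c * ‖z‖ ^ 2) : ℂ)) := by ring
    rw [this, hfac]
    ring
  have hmp : ∫ z : ℂ, f ((rotation ω) z) = ∫ z : ℂ, f z :=
    ((rotation ω).measurePreserving).integral_comp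
      (rotation ω).toHomeomorph.measurableEmbedding f
  have hneg : ∫ z : ℂ, f z = -∫ z : ℂ, f z := by
    conv_lhs => rw [← hmp]
    simp only [key]
    rw [integral_neg]
  have h2 : (2 : ℂ) * ∫ z : ℂ, f z = 0 := by linear_combination hneg
  have := mul_eq_zero.mp h2
  rcases this with h | h
  · exact absurd h (by norm_num)
  · exact h

/-- **The Laughlin state is a zero-energy state of the Haldane pseudo-potential Hamiltonian.**
For `N = n + 2` particles, `m ≤ ℓ − 1`, any sum coordinate `s = z₁ + z₂` and any fixed
remaining particles `z₃, …, z_N`, the inner product in the relative coordinate `z = z₁ − z₂`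
of the state `φ_m(z) = c_m z^m e^{−B|z|²/4}` against the Laughlin function vanishes: the
Laughlin state is annihilated by each projector `|φ_m⟩⟨φ_m|_{ij}` with `m ≤ ℓ − 2`, hence is
a zero-energy eigenstate of `H(ℓ−2, N)`. -/
theorem laughlin_annihilated_by_pseudopotential (B : ℝ) (hB : 0 < B)
    (ℓ : ℕ) (hℓ : 0 < ℓ) (n : ℕ) (m : ℕ) (hm : m ≤ ℓ - 1)
    (s : ℂ) (rest : Fin n → ℂ) :
    ∫ z : ℂ,
        (starRingEnd ℂ z) ^ m * (Real.exp (-(B / 4) * ‖z‖ ^ 2) : ℂ) *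
          jastrow (n + 2) ℓ (Fin.cons ((s + z) / 2) (Fin.cons ((s - z) / 2) rest)) *
          (Real.exp (-(B / 4) * (‖(s + z) / 2‖ ^ 2 + ‖(s - z) / 2‖ ^ 2)) : ℂ) = 0 := by
  classical
  set c : ℝ := 3 * B / 8 with hc
  have hcpos : 0 < c := by positivity
  -- the polynomial whose evaluation at `z` gives the jastrow factor
  set q : Polynomial ℂ :=
    (∏ j : Fin n, (Polynomial.C (2⁻¹ : ℂ) * (Polynomial.C s + Polynomial.X)
        - Polynomial.C (rest j)) ^ ℓ) *
    (∏ j : Fin n, (Polynomial.C (2⁻¹ : ℂ) * (Polynomial.C s - Polynomial.X)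
        - Polynomial.C (rest j)) ^ ℓ) *
    Polynomial.C (jastrow n ℓ rest) with hq
  set p : Polynomial ℂ := Polynomial.X ^ ℓ * q with hp
  -- the jastrow factor equals `p.eval z`
  have hjast : ∀ z : ℂ,
      jastrow (n + 2) ℓ (Fin.cons ((s + z) / 2) (Fin.cons ((s - z) / 2) rest))
        = p.eval z := by
    intro z
    have h1 := jastrow_cons (n + 1) ℓ ((s + z) / 2) (Fin.cons ((s - z) / 2) rest)
    have h2 := jastrow_cons n ℓ ((s - z) / 2) rest
    rw [h1, h2, Fin.prod_univ_succ]
    simp only [Fin.cons_zero, Fin.cons_succ]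
    have hz : (s + z) / 2 - (s - z) / 2 = z := by ring
    rw [hz]
    simp only [hp, hq, Polynomial.eval_mul, Polynomial.eval_pow, Polynomial.eval_prod,
      Polynomial.eval_sub, Polynomial.eval_add, Polynomial.eval_C, Polynomial.eval_X]
    have e1 : ∀ j : Fin n, (s + z) / 2 - rest j = 2⁻¹ * (s + z) - rest j := by
      intro j; ring
    have e2 : ∀ j : Fin n, (s - z) / 2 - rest j = 2⁻¹ * (s - z) - rest j := by
      intro j; ring
    simp_rw [e1, e2]
    ring
  -- support of `p` consists only of exponents `≥ ℓ > m`
  have hsupp : ∀ K ∈ p.support, m < K := by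
    intro K hK
    by_contra h
    push_neg at h
    have hKℓ : K < ℓ := lt_of_le_of_lt h (by omega)
    have hdvd : Polynomial.X ^ ℓ ∣ p := Dvd.intro q rfl
    have := Polynomial.X_pow_dvd_iff.mp hdvd K hKℓ
    exact Polynomial.mem_support_iff.mp hK this
  -- rewrite the integrand
  have hrw : ∀ z : ℂ,
      (starRingEnd ℂ z) ^ m * (Real.exp (-(B / 4) * ‖z‖ ^ 2) : ℂ) *
          jastrow (n + 2) ℓ (Fin.cons ((s + z) / 2) (Fin.cons ((s - z) / 2) rest)) *
          (Real.exp (-(B / 4) * (‖(s + z) / 2‖ ^ 2 + ‖(s - z) / 2‖ ^ 2)) : ℂ)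
        = (Real.exp (-(B / 8) * ‖s‖ ^ 2) : ℂ) *
            ∑ K ∈ p.support, p.coeff K *
              ((starRingEnd ℂ z) ^ m * z ^ K * (Real.exp (-c * ‖z‖ ^ 2) : ℂ)) := by
    intro z
    have hpar : ‖(s + z) / 2‖ ^ 2 + ‖(s - z) / 2‖ ^ 2 = (‖s‖ ^ 2 + ‖z‖ ^ 2) / 2 := by
      have h := parallelogram_law_with_norm ℝ (s / 2) (z / 2)
      have e1 : s / 2 + z / 2 = (s + z) / 2 := by ring
      have e2 : s / 2 - z / 2 = (s - z) / 2 := by ring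
      rw [e1, e2] at h
      have n1 : ‖s / 2‖ = ‖s‖ / 2 := by
        rw [show s / 2 = (2⁻¹ : ℝ) • s by simp [smul_eq_mul]; ring]
        rw [norm_smul]; norm_num; ring
      have n2 : ‖z / 2‖ = ‖z‖ / 2 := by
        rw [show z / 2 = (2⁻¹ : ℝ) • z by simp [smul_eq_mul]; ring]
        rw [norm_smul]; norm_num; ring
      rw [n1, n2] at h
      nlinarith [h]
    rw [hpar, hjast z]
    have hexp : (Real.exp (-(B / 4) * ‖z‖ ^ 2) : ℂ) *
        (Real.exp (-(B / 4) * ((‖s‖ ^ 2 + ‖z‖ ^ 2) / 2)) : ℂ)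
        = (Real.exp (-(B / 8) * ‖s‖ ^ 2) : ℂ) * (Real.exp (-c * ‖z‖ ^ 2) : ℂ) := by
      rw [← Complex.ofReal_mul, ← Complex.ofReal_mul, ← Real.exp_add, ← Real.exp_add]
      congr 1
      rw [hc]; ring
    have heval : p.eval z = ∑ K ∈ p.support, p.coeff K * z ^ K := by
      conv_lhs => rw [Polynomial.eval_eq_sum, Polynomial.sum_def]
    rw [heval]
    simp only [Finset.mul_sum, Finset.sum_mul]
    refine Finset.sum_congr rfl fun K _ => ?_
    have := hexp
    calc (starRingEnd ℂ z) ^ m * (Real.exp (-(B / 4) * ‖z‖ ^ 2) : ℂ) *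
          (p.coeff K * z ^ K) * (Real.exp (-(B / 4) * ((‖s‖ ^ 2 + ‖z‖ ^ 2) / 2)) : ℂ)
        = ((Real.exp (-(B / 4) * ‖z‖ ^ 2) : ℂ) *
            (Real.exp (-(B / 4) * ((‖s‖ ^ 2 + ‖z‖ ^ 2) / 2)) : ℂ)) *
          (p.coeff K * ((starRingEnd ℂ z) ^ m * z ^ K)) := by ring
      _ = (Real.exp (-(B / 8) * ‖s‖ ^ 2) : ℂ) *
            (p.coeff K * ((starRingEnd ℂ z) ^ m * z ^ K * (Real.exp (-c * ‖z‖ ^ 2) : ℂ))) := by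
          rw [hexp]; ring
  simp_rw [hrw]
  rw [integral_const_mul]
  rw [integral_finset_sum _ (fun K _ =>
    ((integrable_conj_pow_mul_pow_gaussian c hcpos m K).const_mul _))]
  have : ∀ K ∈ p.support,
      (∫ z : ℂ, p.coeff K *
        ((starRingEnd ℂ z) ^ m * z ^ K * (Real.exp (-c * ‖z‖ ^ 2) : ℂ))) = 0 := by
    intro K hK
    rw [integral_const_mul, integral_conj_pow_mul_pow_gaussian c m K (hsupp K hK), mul_zero]
  rw [Finset.sum_congr rfl this]
  simp
end
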